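/- Local exactness of the lowest-order 2D Adini complex at the 1-form space: Let curl f := (−∂_y f, ∂_x f), let S⁰ := {f ∈ ℝ[x,y] : deg f ≤ 3} + span{x³y, xy³}, and let S¹ := {(p,q) ∈ ℝ[x,y]² : deg p ≤ 2 and deg q ≤ 2} + span{curl(x³y), curl(xy³)}. Then (i) {u ∈ S¹ : ∂_x u₁ + ∂_y u₂ = 0} = {curl φ : φ ∈ S⁰}, and (ii) {∂_x u₁ + ∂_y u₂ : u ∈ S¹} = {f ∈ ℝ[x,y] : deg f ≤ 1}. -/

import Mathlib

open MvPolynomial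

noncomputable section

/-- Polynomials in two variables `x, y` over `ℝ`. -/
abbrev M2 : Type := MvPolynomial (Fin 2) ℝ

def x : M2 := X 0
def y : M2 := X 1

/-- The 2D curl of a scalar polynomial: `curl f = (−∂_y f, ∂_x f)`. -/
def curl2 (f : M2) : Fin 2 → M2 := ![-(pderiv 1 f), pderiv 0 f]

/-- The divergence of a polynomial vector field. -/
def div2 (u : Fin 2 → M2) : M2 := pderiv 0 (u 0) + pderiv 1 (u 1)

/-- The lowest-order 2D Adini 0-form shape space `S⁰ := P₃ + span{x³y, xy³}`. -/
def S0 : Submodule ℝ M2 :=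
  restrictTotalDegree (Fin 2) ℝ 3 ⊔ Submodule.span ℝ {x ^ 3 * y, x * y ^ 3}

/-- The lowest-order 2D Adini 1-form shape space
`S¹ := [P₂]² + span{curl(x³y), curl(xy³)}`. -/
def S1 : Submodule ℝ (Fin 2 → M2) :=
  (Submodule.pi Set.univ fun _ => restrictTotalDegree (Fin 2) ℝ 2) ⊔
    Submodule.span ℝ {curl2 (x ^ 3 * y), curl2 (x * y ^ 3)}

/-!
Since `∂ₓ` and `∂ᵧ` commute, `div ∘ curl = 0`; in particular the two curls added to `[P₂]²`
are divergence-free. On the full polynomial spaces the sequence `P₃ → [P₂]² → P₁` is exact: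
a divergence-free `(p, q)` is the curl of `∫ₓ q - ∫ᵧ (p - ∫ₓ ∂ₓ p)`, and `r = div (∫ₓ r, 0)`.
Since the extra span in `S¹` is the curl of the extra span in `S⁰` and lies in `ker div`, the
modular law `(A ⊔ B) ⊓ K = (A ⊓ K) ⊔ B` for `B ≤ K` transfers both statements to `S⁰ → S¹ → P₁`.
-/

namespace MvPolynomial

variable {σ R : Type*} [CommRing R]

theorem pderiv_pderiv_comm (i j : σ) (p : MvPolynomial σ R) :
    pderiv i (pderiv j p) = pderiv j (pderiv i p) := by
  have hcomm :
      ⁅pderiv i, pderiv j⁆ = (0 : Derivation R (MvPolynomial σ R) (MvPolynomial σ R)) :=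
    derivation_ext fun k => by
      classical
      rw [Derivation.commutator_apply, pderiv_X, pderiv_X]
      simp [Pi.single_apply, apply_ite]
  have := congr($hcomm p)
  rwa [Derivation.commutator_apply, Derivation.zero_apply, sub_eq_zero] at this

theorem monomial_mem_restrictTotalDegree {s : σ →₀ ℕ} {n : ℕ} (h : s.degree ≤ n) (c : R) :
    monomial s c ∈ restrictTotalDegree σ R n :=
  (mem_restrictTotalDegree _ _ _).mpr ((totalDegree_monomial_le s c).trans h)

theorem map_restrictTotalDegree_le {L : MvPolynomial σ R →ₗ[R] MvPolynomial σ R} {m n : ℕ}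
    (h : ∀ s : σ →₀ ℕ, s.degree ≤ m → L (monomial s 1) ∈ restrictTotalDegree σ R n) :
    (restrictTotalDegree σ R m).map L ≤ restrictTotalDegree σ R n := by
  rw [restrictTotalDegree, restrictSupport_eq_span, Submodule.map_span_le]
  rintro _ ⟨s, hs, rfl⟩
  exact h s hs

theorem pderiv_mem_restrictTotalDegree (i : σ) {n : ℕ} {p : MvPolynomial σ R}
    (hp : p ∈ restrictTotalDegree σ R (n + 1)) : pderiv i p ∈ restrictTotalDegree σ R n := by
  refine map_restrictTotalDegree_le (L := (pderiv i).toLinearMap) (fun s hs => ?_)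
    (Submodule.mem_map_of_mem hp)
  rw [Derivation.coeFn_coe, pderiv_monomial]
  by_cases hsi : s i = 0
  · simp [hsi]
  · refine monomial_mem_restrictTotalDegree ?_ _
    rw [← Finsupp.sub_add_single_one_cancel hsi, map_add, Finsupp.degree_single] at hs
    omega

section Antiderivative

variable {S : Type*} [Field S]

def pintegral (i : σ) : MvPolynomial σ S →ₗ[S] MvPolynomial σ S :=
  (basisMonomials σ S).constr S fun m => monomial (m + Finsupp.single i 1) ((m i + 1 : S)⁻¹)

theorem pintegral_monomial (i : σ) (m : σ →₀ ℕ) (c : S) :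
    pintegral i (monomial m c) = monomial (m + Finsupp.single i 1) ((m i + 1 : S)⁻¹ * c) := by
  have h := (basisMonomials σ S).constr_basis S
    (fun m => monomial (m + Finsupp.single i 1) ((m i + 1 : S)⁻¹)) m
  simp only [coe_basisMonomials] at h
  have hc : monomial m c = c • monomial m (1 : S) := by rw [smul_monomial, smul_eq_mul, mul_one]
  rw [hc, map_smul, pintegral, h, smul_monomial, smul_eq_mul, mul_comm]

theorem pderiv_pintegral_self [CharZero S] (i : σ) (p : MvPolynomial σ S) :
    pderiv i (pintegral i p) = p := by
  suffices (pderiv i).toLinearMap ∘ₗ pintegral i = LinearMap.id from congr($this p)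
  refine (basisMonomials σ S).ext fun m => ?_
  rw [coe_basisMonomials, LinearMap.comp_apply, pintegral_monomial, Derivation.coeFn_coe,
    pderiv_monomial, add_tsub_cancel_right, Finsupp.add_apply, Finsupp.single_eq_same]
  push_cast
  rw [mul_one, inv_mul_cancel₀ (Nat.cast_add_one_ne_zero _)]
  rfl

theorem pderiv_pintegral_of_ne {i j : σ} (hij : i ≠ j) (p : MvPolynomial σ S) :
    pderiv j (pintegral i p) = pintegral i (pderiv j p) := by
  suffices (pderiv j).toLinearMap ∘ₗ pintegral i = pintegral i ∘ₗ (pderiv j).toLinearMap from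
    congr($this p)
  refine (basisMonomials σ S).ext fun m => ?_
  simp only [coe_basisMonomials, LinearMap.comp_apply, Derivation.coeFn_coe, pintegral_monomial,
    pderiv_monomial]
  by_cases hmj : m j = 0
  · simp [hmj, hij.symm]
  · rw [Finsupp.sub_single_one_add hmj, Finsupp.tsub_apply, Finsupp.add_apply,
      Finsupp.single_eq_of_ne hij.symm, Finsupp.single_eq_of_ne hij, tsub_zero, add_zero]
    ring_nf

theorem pintegral_mem_restrictTotalDegree (i : σ) {n : ℕ} {p : MvPolynomial σ S}
    (hp : p ∈ restrictTotalDegree σ S n) : pintegral i p ∈ restrictTotalDegree σ S (n + 1) := by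
  refine map_restrictTotalDegree_le (fun s hs => ?_) (Submodule.mem_map_of_mem hp)
  rw [pintegral_monomial]
  exact monomial_mem_restrictTotalDegree (by rw [map_add, Finsupp.degree_single]; omega) _

/-- `p - ∫ᵢ ∂ᵢ p` keeps exactly the monomials of `p` free of the `i`-th variable, so it is
killed by `∂ᵢ`; this is what makes `∂ᵢ (planePotential i j p q) = q` hold. -/
def planePotential (i j : σ) (p q : MvPolynomial σ S) : MvPolynomial σ S :=
  pintegral i q - pintegral j (p - pintegral i (pderiv i p))

variable {i j : σ} {p q : MvPolynomial σ S}

theorem planePotential_mem_restrictTotalDegree {n : ℕ}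
    (hp : p ∈ restrictTotalDegree σ S (n + 1)) (hq : q ∈ restrictTotalDegree σ S (n + 1)) :
    planePotential i j p q ∈ restrictTotalDegree σ S (n + 2) := by
  have hp' : p - pintegral i (pderiv i p) ∈ restrictTotalDegree σ S (n + 1) :=
    Submodule.sub_mem _ hp
      (pintegral_mem_restrictTotalDegree i (pderiv_mem_restrictTotalDegree i hp))
  exact Submodule.sub_mem _ (pintegral_mem_restrictTotalDegree i hq)
    (pintegral_mem_restrictTotalDegree j hp')

variable [CharZero S]

theorem pderiv_planePotential_left (hij : i ≠ j) :
    pderiv i (planePotential i j p q) = q := by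
  rw [planePotential, map_sub, pderiv_pintegral_self, pderiv_pintegral_of_ne hij.symm, map_sub,
    pderiv_pintegral_self, sub_self, map_zero, sub_zero]

theorem pderiv_planePotential_right (hij : i ≠ j) (h : pderiv i p + pderiv j q = 0) :
    pderiv j (planePotential i j p q) = -p := by
  rw [planePotential, map_sub, pderiv_pintegral_self, pderiv_pintegral_of_ne hij,
    eq_neg_of_add_eq_zero_right h, map_neg]
  ring

end Antiderivative

end MvPolynomial

def curl2ₗ : M2 →ₗ[ℝ] Fin 2 → M2 :=
  LinearMap.pi ![-(pderiv 1).toLinearMap, (pderiv 0).toLinearMap]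

def div2ₗ : (Fin 2 → M2) →ₗ[ℝ] M2 :=
  (pderiv 0).toLinearMap ∘ₗ LinearMap.proj 0 + (pderiv 1).toLinearMap ∘ₗ LinearMap.proj 1

@[simp]
theorem curl2ₗ_apply (f : M2) : curl2ₗ f = curl2 f := by
  ext i : 1
  fin_cases i <;> rfl

@[simp]
theorem div2ₗ_apply (u : Fin 2 → M2) : div2ₗ u = div2 u := rfl

theorem div2_curl2 (f : M2) : div2 (curl2 f) = 0 := by
  simp only [div2, curl2, Matrix.cons_val_zero, Matrix.cons_val_one, map_neg]
  rw [pderiv_pderiv_comm, neg_add_cancel]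

theorem range_curl2ₗ_le_ker_div2ₗ : LinearMap.range curl2ₗ ≤ LinearMap.ker div2ₗ := by
  rintro _ ⟨f, rfl⟩
  simp [div2_curl2]

theorem curl2_mem_pi_restrictTotalDegree {n : ℕ} {f : M2}
    (hf : f ∈ restrictTotalDegree (Fin 2) ℝ (n + 1)) :
    curl2 f ∈ Submodule.pi Set.univ fun _ => restrictTotalDegree (Fin 2) ℝ n := by
  refine Submodule.mem_pi.mpr fun i _ => ?_
  fin_cases i
  · exact Submodule.neg_mem _ (pderiv_mem_restrictTotalDegree 1 hf)
  · exact pderiv_mem_restrictTotalDegree 0 hf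

theorem map_curl2ₗ_restrictTotalDegree (n : ℕ) :
    (restrictTotalDegree (Fin 2) ℝ (n + 2)).map curl2ₗ =
      (Submodule.pi Set.univ fun _ => restrictTotalDegree (Fin 2) ℝ (n + 1)) ⊓
        LinearMap.ker div2ₗ := by
  refine le_antisymm (le_inf ?_ (LinearMap.map_le_range.trans range_curl2ₗ_le_ker_div2ₗ)) ?_
  · rintro _ ⟨f, hf, rfl⟩
    simpa using curl2_mem_pi_restrictTotalDegree hf
  · rintro u ⟨hu, hdiv⟩
    have hu0 := Submodule.mem_pi.mp hu 0 trivial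
    have hu1 := Submodule.mem_pi.mp hu 1 trivial
    have hdiv' : pderiv 0 (u 0) + pderiv 1 (u 1) = 0 := LinearMap.mem_ker.mp hdiv
    refine ⟨planePotential 0 1 (u 0) (u 1), planePotential_mem_restrictTotalDegree hu0 hu1, ?_⟩
    ext i : 1
    fin_cases i
    · simp [curl2, pderiv_planePotential_right zero_ne_one hdiv']
    · simp [curl2, pderiv_planePotential_left zero_ne_one]

theorem map_div2ₗ_pi_restrictTotalDegree (n : ℕ) :
    (Submodule.pi Set.univ fun _ => restrictTotalDegree (Fin 2) ℝ (n + 1)).map div2ₗ =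
      restrictTotalDegree (Fin 2) ℝ n := by
  refine le_antisymm ?_ fun r hr => ⟨![pintegral 0 r, 0], ?_, ?_⟩
  · rintro _ ⟨u, hu, rfl⟩
    exact Submodule.add_mem _
      (pderiv_mem_restrictTotalDegree 0 (Submodule.mem_pi.mp hu 0 trivial))
      (pderiv_mem_restrictTotalDegree 1 (Submodule.mem_pi.mp hu 1 trivial))
  · refine Submodule.mem_pi.mpr fun i _ => ?_
    fin_cases i
    · exact pintegral_mem_restrictTotalDegree 0 hr
    · exact Submodule.zero_mem _
  · simp [div2, pderiv_pintegral_self]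

theorem span_curl2_eq_map_span (f g : M2) :
    Submodule.span ℝ {curl2 f, curl2 g} = (Submodule.span ℝ {f, g}).map curl2ₗ := by
  rw [Submodule.map_span, Set.image_pair, curl2ₗ_apply, curl2ₗ_apply]

/-- Local exactness of the lowest-order 2D Adini complex at the 1-form space:
the divergence-free fields in `S¹` are exactly the curls of potentials in
`S⁰`, and the divergence maps `S¹` onto the polynomials of total degree at
most 1. -/
theorem adini_complex_local_exactness :
    ({u : Fin 2 → M2 | u ∈ S1 ∧ div2 u = 0} =
      {u : Fin 2 → M2 | ∃ φ ∈ S0, u = curl2 φ}) ∧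
    ({p : M2 | ∃ u ∈ S1, p = div2 u} = {p : M2 | p.totalDegree ≤ 1}) := by
  set B := Submodule.span ℝ {x ^ 3 * y, x * y ^ 3}
  have hB : B.map curl2ₗ ≤ LinearMap.ker div2ₗ :=
    LinearMap.map_le_range.trans range_curl2ₗ_le_ker_div2ₗ
  have hS1 :
      S1 = B.map curl2ₗ ⊔ Submodule.pi Set.univ fun _ => restrictTotalDegree (Fin 2) ℝ 2 := by
    rw [S1, span_curl2_eq_map_span, sup_comm]
  have h_ker : S1 ⊓ LinearMap.ker div2ₗ = S0.map curl2ₗ := by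
    rw [hS1, sup_inf_assoc_of_le _ hB, ← map_curl2ₗ_restrictTotalDegree 1, S0, Submodule.map_sup,
      sup_comm]
  have h_range : S1.map div2ₗ = restrictTotalDegree (Fin 2) ℝ 1 := by
    rw [hS1, Submodule.map_sup, LinearMap.le_ker_iff_map.mp hB, bot_sup_eq,
      map_div2ₗ_pi_restrictTotalDegree 1]
  constructor
  · ext u
    simpa [eq_comm] using SetLike.ext_iff.mp h_ker u
  · ext p
    simpa [eq_comm, mem_restrictTotalDegree] using SetLike.ext_iff.mp h_range p

end
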